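/- arXiv:2602.00171 — 4 statements merged into one kernel-verified Lean document; each statement's English description precedes it below -/
import Mathlib

section
/- RKHS width bound: let H be a real Hilbert space, k : X → H a map with ⟨k(x), k(x)⟩ ≤ κ² for all x ∈ X, and Ω : X → ℝ^d a feature map; for (h, β) ∈ H × ℝ^d define the predictor h_{h,β}(x) = ⟨h, k(x)⟩ + ⟨Ω(x), β⟩. Fix data points (x_i, φ_i), i = 1,…,N, with (1/N) Σ_{i=1}^N |φ_i| ≤ B, fix λ₁, λ₂ > 0 and quantile levels τ_L, τ_U ∈ (0,1), and let (ĥ^L, β̂^L) and (ĥ^U, β̂^U) be minimizers over H × ℝ^d of the objectives J_τ(h, β) = (1/N) Σ_{i=1}^N ℓ_τ(h_{h,β}(x_i), φ_i) + λ₁‖h‖² + λ₂‖β‖² for τ = τ_L and τ = τ_U respectively. Then for every x ∈ X, the interval width satisfies |h_{ĥ^U,β̂^U}(x) − h_{ĥ^L,β̂^L}(x)| ≤ 2(κ·√(B/λ₁) + ‖Ω(x)‖·√(B/λ₂)). -/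
open scoped RealInnerProductSpace

/-- The pinball (quantile) loss: `ℓ_τ(u, v) = (τ − 𝟙{v ≤ u}) · (v − u)`. -/
noncomputable def pinball (τ u v : ℝ) : ℝ :=
  (τ - if v ≤ u then 1 else 0) * (v - u)

lemma pinball_nonneg {τ u v : ℝ} (h0 : 0 < τ) (h1 : τ < 1) : 0 ≤ pinball τ u v := by
  unfold pinball; split_ifs with h
  · nlinarith
  · push_neg at h; nlinarith

lemma pinball_zero_le {τ v : ℝ} (h0 : 0 < τ) (h1 : τ < 1) : pinball τ 0 v ≤ |v| := by
  unfold pinball; split_ifs with h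
  · rw [abs_of_nonpos h]; nlinarith
  · push_neg at h; rw [abs_of_pos h]; nlinarith

/-- RKHS width bound: for regularized pinball-loss quantile regression in an RKHS with
bounded kernel plus a finite-dimensional linear part, the width of the interval formed by
the upper- and lower-quantile predictors is at most
`2(κ·√(B/λ₁) + ‖Ω(x)‖·√(B/λ₂))` at every point `x`. -/
theorem rkhs_width_bound {X : Type*} {H : Type*}
    [NormedAddCommGroup H] [InnerProductSpace ℝ H] [CompleteSpace H]
    {d : ℕ} (k : X → H) (κ : ℝ) (hκ : 0 ≤ κ) (hk : ∀ x, ⟪k x, k x⟫ ≤ κ ^ 2)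
    (Om : X → EuclideanSpace ℝ (Fin d))
    (N : ℕ) (hN : 0 < N) (xs : Fin N → X) (φ : Fin N → ℝ)
    (B : ℝ) (hB : (1 / (N : ℝ)) * ∑ i, |φ i| ≤ B)
    (lam₁ lam₂ : ℝ) (hlam₁ : 0 < lam₁) (hlam₂ : 0 < lam₂)
    (τL τU : ℝ) (hτL : τL ∈ Set.Ioo (0 : ℝ) 1) (hτU : τU ∈ Set.Ioo (0 : ℝ) 1)
    -- the predictor associated with parameters `(h, β)`
    (pred : H → EuclideanSpace ℝ (Fin d) → X → ℝ)
    (hpred : ∀ h β x, pred h β x = ⟪h, k x⟫ + ⟪Om x, β⟫)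
    -- the regularized empirical pinball objective at quantile level `τ`
    (J : ℝ → H → EuclideanSpace ℝ (Fin d) → ℝ)
    (hJ : ∀ τ h β, J τ h β =
      (1 / (N : ℝ)) * ∑ i, pinball τ (pred h β (xs i)) (φ i) +
        lam₁ * ‖h‖ ^ 2 + lam₂ * ‖β‖ ^ 2)
    (hL : H) (bL : EuclideanSpace ℝ (Fin d))
    (hU : H) (bU : EuclideanSpace ℝ (Fin d))
    (hminL : ∀ h β, J τL hL bL ≤ J τL h β)
    (hminU : ∀ h β, J τU hU bU ≤ J τU h β) :
    ∀ x, |pred hU bU x - pred hL bL x| ≤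
      2 * (κ * Real.sqrt (B / lam₁) + ‖Om x‖ * Real.sqrt (B / lam₂)) := by
  have hNpos : (0:ℝ) < N := by exact_mod_cast hN
  have hkx : ∀ x, ‖k x‖ ≤ κ := by
    intro x
    have := hk x
    rw [real_inner_self_eq_norm_sq] at this
    nlinarith [norm_nonneg (k x)]
  have norm_bound : ∀ τ ∈ Set.Ioo (0:ℝ) 1, ∀ (h : H) (β : EuclideanSpace ℝ (Fin d)),
      (∀ h' β', J τ h β ≤ J τ h' β') →
      ‖h‖ ≤ Real.sqrt (B / lam₁) ∧ ‖β‖ ≤ Real.sqrt (B / lam₂) := by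
    rintro τ ⟨hτ0, hτ1⟩ h β hmin
    have hJ00 : J τ 0 0 ≤ B := by
      rw [hJ]
      have hp0 : ∀ i, pred 0 0 (xs i) = 0 := by
        intro i; rw [hpred]; simp
      have hsum : ∑ i, pinball τ (pred 0 0 (xs i)) (φ i) ≤ ∑ i, |φ i| := by
        apply Finset.sum_le_sum
        intro i _
        rw [hp0]
        exact pinball_zero_le hτ0 hτ1
      have : (1 / (N:ℝ)) * ∑ i, pinball τ (pred 0 0 (xs i)) (φ i) ≤
          (1 / (N:ℝ)) * ∑ i, |φ i| :=
        mul_le_mul_of_nonneg_left hsum (by positivity)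
      simpa using this.trans hB
    have hJle : J τ h β ≤ B := (hmin 0 0).trans hJ00
    have hsumnn : 0 ≤ (1 / (N:ℝ)) * ∑ i, pinball τ (pred h β (xs i)) (φ i) := by
      apply mul_nonneg (by positivity)
      exact Finset.sum_nonneg fun i _ => pinball_nonneg hτ0 hτ1
    rw [hJ] at hJle
    have hh2 : ‖h‖ ^ 2 ≤ B / lam₁ := by
      rw [le_div_iff₀ hlam₁]
      nlinarith [sq_nonneg ‖β‖]
    have hb2 : ‖β‖ ^ 2 ≤ B / lam₂ := by
      rw [le_div_iff₀ hlam₂]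
      nlinarith [sq_nonneg ‖h‖]
    have hBnn : 0 ≤ B := le_trans (by positivity) hB
    exact ⟨(Real.le_sqrt (norm_nonneg _) (by positivity)).mpr hh2,
           (Real.le_sqrt (norm_nonneg _) (by positivity)).mpr hb2⟩
  have predb : ∀ τ ∈ Set.Ioo (0:ℝ) 1, ∀ (h : H) (β : EuclideanSpace ℝ (Fin d)),
      (∀ h' β', J τ h β ≤ J τ h' β') → ∀ x,
      |pred h β x| ≤ κ * Real.sqrt (B / lam₁) + ‖Om x‖ * Real.sqrt (B / lam₂) := by
    intro τ hτ h β hmin x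
    obtain ⟨hh, hb⟩ := norm_bound τ hτ h β hmin
    rw [hpred]
    calc |⟪h, k x⟫ + ⟪Om x, β⟫| ≤ |⟪h, k x⟫| + |⟪Om x, β⟫| := abs_add_le _ _
      _ ≤ ‖h‖ * ‖k x‖ + ‖Om x‖ * ‖β‖ := by
          gcongr <;> exact abs_real_inner_le_norm _ _
      _ ≤ κ * Real.sqrt (B / lam₁) + ‖Om x‖ * Real.sqrt (B / lam₂) := by
          have := hkx x
          have h1 : ‖h‖ * ‖k x‖ ≤ Real.sqrt (B / lam₁) * κ := by
            apply mul_le_mul hh (hkx x) (norm_nonneg _) (Real.sqrt_nonneg _)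
          have h2 : ‖Om x‖ * ‖β‖ ≤ ‖Om x‖ * Real.sqrt (B / lam₂) :=
            mul_le_mul_of_nonneg_left hb (norm_nonneg _)
          nlinarith
  intro x
  have hU' := predb τU hτU hU bU hminU x
  have hL' := predb τL hτL hL bL hminL x
  calc |pred hU bU x - pred hL bL x| ≤ |pred hU bU x| + |pred hL bL x| := abs_sub _ _
    _ ≤ 2 * (κ * Real.sqrt (B / lam₁) + ‖Om x‖ * Real.sqrt (B / lam₂)) := by linarith
end

section
/- Deterministic near-optimal selection lemma: let p, q ≥ 1 be integers, φ : {1,…,p} → ℝ, V a real-valued function on subsets of {1,…,p}, and δ ≥ 0 such that |Σ_{j∈S} φ_j − V(S)| ≤ 2qδ for every subset S with |S| ≤ q. Let L, U : {1,…,p} → ℝ satisfy L_j ≤ φ_j ≤ U_j for all j. Let Ŝ be a subset with |Ŝ| ≤ q such that Σ_{j∈S} U_j ≤ Σ_{j∈Ŝ} U_j for every subset S with |S| ≤ q, and let S* be a subset with |S*| ≤ q such that V(S) ≤ V(S*) for every subset S with |S| ≤ q. Then V(Ŝ) ≥ V(S*) − Σ_{j∈Ŝ} (U_j − L_j) − 4qδ.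 -/
open Finset

theorem sum_le_sum_add_sum_sub_of_sum_upper_le {ι α : Type*} [AddCommGroup α] [PartialOrder α]
    [IsOrderedAddMonoid α] {s t : Finset ι} {φ L U : ι → α}
    (hL : ∀ j ∈ t, L j ≤ φ j) (hU : ∀ j ∈ s, φ j ≤ U j)
    (hst : ∑ j ∈ s, U j ≤ ∑ j ∈ t, U j) :
    ∑ j ∈ s, φ j ≤ ∑ j ∈ t, φ j + ∑ j ∈ t, (U j - L j) :=
  calc ∑ j ∈ s, φ j ≤ ∑ j ∈ s, U j := sum_le_sum hU
    _ ≤ ∑ j ∈ t, U j := hst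
    _ = ∑ j ∈ t, L j + ∑ j ∈ t, (U j - L j) := by
      rw [← sum_add_distrib]; simp
    _ ≤ ∑ j ∈ t, φ j + ∑ j ∈ t, (U j - L j) := by gcongr with j hj; exact hL j hj

theorem near_optimal_selection_general (p q : ℕ)
    (φ : Fin p → ℝ) (V : Finset (Fin p) → ℝ) (δ : ℝ)
    (happrox : ∀ S : Finset (Fin p), S.card ≤ q →
      |(∑ j ∈ S, φ j) - V S| ≤ 2 * q * δ)
    (L U : Fin p → ℝ) (hL : ∀ j, L j ≤ φ j) (hU : ∀ j, φ j ≤ U j)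
    (Shat : Finset (Fin p)) (hShatCard : Shat.card ≤ q)
    (hShatMax : ∀ S : Finset (Fin p), S.card ≤ q → (∑ j ∈ S, U j) ≤ ∑ j ∈ Shat, U j)
    (Sstar : Finset (Fin p)) (hSstarCard : Sstar.card ≤ q) :
    V Shat ≥ V Sstar - (∑ j ∈ Shat, (U j - L j)) - 4 * q * δ := by
  have hShat := abs_le.mp (happrox Shat hShatCard)
  have hSstar := abs_le.mp (happrox Sstar hSstarCard)
  have hgap := sum_le_sum_add_sum_sub_of_sum_upper_le (fun j _ ↦ hL j) (fun j _ ↦ hU j)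
    (hShatMax Sstar hSstarCard)
  linarith

/-- Deterministic near-optimal selection lemma: if the modality values `φ_j` sum to the
utility `V(S)` up to error `2qδ` on subsets of size at most `q`, `[L_j, U_j]` are
intervals containing `φ_j`, `Ŝ` maximizes the sum of upper bounds `U_j` among subsets of
size at most `q`, and `S*` maximizes `V` among such subsets, then
`V(Ŝ) ≥ V(S*) − Σ_{j∈Ŝ} (U_j − L_j) − 4qδ`. -/
theorem near_optimal_selection (p q : ℕ) (hp : 1 ≤ p) (hq : 1 ≤ q)
    (φ : Fin p → ℝ) (V : Finset (Fin p) → ℝ) (δ : ℝ) (hδ : 0 ≤ δ)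
    (happrox : ∀ S : Finset (Fin p), S.card ≤ q →
      |(∑ j ∈ S, φ j) - V S| ≤ 2 * q * δ)
    (L U : Fin p → ℝ) (hL : ∀ j, L j ≤ φ j) (hU : ∀ j, φ j ≤ U j)
    (Shat : Finset (Fin p)) (hShatCard : Shat.card ≤ q)
    (hShatMax : ∀ S : Finset (Fin p), S.card ≤ q → (∑ j ∈ S, U j) ≤ ∑ j ∈ Shat, U j)
    (Sstar : Finset (Fin p)) (hSstarCard : Sstar.card ≤ q)
    (hSstarMax : ∀ S : Finset (Fin p), S.card ≤ q → V S ≤ V Sstar) :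
    V Shat ≥ V Sstar - (∑ j ∈ Shat, (U j - L j)) - 4 * q * δ :=
  near_optimal_selection_general p q φ V δ happrox L U hL hU Shat hShatCard hShatMax Sstar
    hSstarCard
end

section
/- Probabilistic near-optimal utility of the selected modality set (classification form): let (Ω, μ) be a probability space, p, q ≥ 1 integers, α ∈ (0,1), φ : {1,…,p} → ℝ fixed reals, V a real-valued function on subsets of {1,…,p}, and δ ≥ 0 with |Σ_{j∈S} φ_j − V(S)| ≤ 2qδ for every subset S with |S| ≤ q. Let L_j, U_j : Ω → ℝ be measurable (random interval endpoints) and e_j⁻, e_j⁺ ≥ 0 satisfy μ({ω : φ_j < L_j(ω)}) ≤ α/(2p) + e_j⁻ and μ({ω : φ_j > U_j(ω)}) ≤ α/(2p) + e_j⁺ for every j. Let Ŝ : Ω → (subsets of {1,…,p}) satisfy, for every ω, |Ŝ(ω)| ≤ q and Σ_{j∈S} U_j(ω) ≤ Σ_{j∈Ŝ(ω)} U_j(ω) for every subset S with |S| ≤ q, and let S* with |S*| ≤ q satisfy V(S) ≤ V(S*) for every subset S with |S| ≤ q. Then μ({ω : V(Ŝ(ω)) ≥ V(S*) − Σ_{j∈Ŝ(ω)}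 (U_j(ω) − L_j(ω)) − 4qδ}) ≥ 1 − α − Σ_{j=1}^p (e_j⁻ + e_j⁺). -/
open Finset MeasureTheory

/-- Probabilistic near-optimal utility of the selected modality set (classification form):
if each conformal interval `[L_j, U_j]` miscovera the Shapley value `φ_j` on each side with
probability at most `α/(2p)` plus slack `e_j⁻`/`e_j⁺`, the utility `V` is additive in `φ`
up to error `2qδ` on subsets of size at most `q`, `Ŝ(ω)` maximizes the sum of upper bounds
among subsets of size at most `q`, and `S*` maximizes `V`, then with probability at least
`1 − α − Σ_j (e_j⁻ + e_j⁺)`,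
`V(Ŝ(ω)) ≥ V(S*) − Σ_{j∈Ŝ(ω)} (U_j(ω) − L_j(ω)) − 4qδ`. -/
theorem near_optimal_selection_classification
    {Ω : Type*} [MeasurableSpace Ω] (μ : Measure Ω) [IsProbabilityMeasure μ]
    (p q : ℕ) (hp : 1 ≤ p) (hq : 1 ≤ q) (α : ℝ) (hα : α ∈ Set.Ioo (0 : ℝ) 1)
    (φ : Fin p → ℝ) (V : Finset (Fin p) → ℝ) (δ : ℝ) (hδ : 0 ≤ δ)
    (happrox : ∀ S : Finset (Fin p), S.card ≤ q →
      |(∑ j ∈ S, φ j) - V S| ≤ 2 * q * δ)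
    (L U : Fin p → Ω → ℝ) (hLmeas : ∀ j, Measurable (L j)) (hUmeas : ∀ j, Measurable (U j))
    (em ep : Fin p → ℝ) (hem : ∀ j, 0 ≤ em j) (hep : ∀ j, 0 ≤ ep j)
    (hcovL : ∀ j, μ {ω | φ j < L j ω} ≤ ENNReal.ofReal (α / (2 * p) + em j))
    (hcovU : ∀ j, μ {ω | φ j > U j ω} ≤ ENNReal.ofReal (α / (2 * p) + ep j))
    (Shat : Ω → Finset (Fin p)) (hShatCard : ∀ ω, (Shat ω).card ≤ q)
    (hShatMax : ∀ ω, ∀ S : Finset (Fin p), S.card ≤ q →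
      (∑ j ∈ S, U j ω) ≤ ∑ j ∈ Shat ω, U j ω)
    (Sstar : Finset (Fin p)) (hSstarCard : Sstar.card ≤ q)
    (hSstarMax : ∀ S : Finset (Fin p), S.card ≤ q → V S ≤ V Sstar) :
    μ {ω | V (Shat ω) ≥
        V Sstar - (∑ j ∈ Shat ω, (U j ω - L j ω)) - 4 * q * δ} ≥
      ENNReal.ofReal (1 - α - ∑ j, (em j + ep j)) := by

  obtain ⟨hα0, hα1⟩ := hα
  set B : Set Ω := ⋃ j, ({ω | φ j < L j ω} ∪ {ω | φ j > U j ω}) with hBdef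
  have hBmeas : MeasurableSet B := by
    apply MeasurableSet.iUnion
    intro j
    exact (measurableSet_lt measurable_const (hLmeas j)).union
      (measurableSet_lt (hUmeas j) measurable_const)
  have hsub : Bᶜ ⊆ {ω | V (Shat ω) ≥
      V Sstar - (∑ j ∈ Shat ω, (U j ω - L j ω)) - 4 * q * δ} := by
    intro ω hω
    simp only [hBdef, Set.mem_compl_iff, Set.mem_iUnion, Set.mem_union,
      Set.mem_setOf_eq, not_exists, not_or, not_lt, gt_iff_lt] at hω
    have h1 := abs_le.mp (happrox (Shat ω) (hShatCard ω))
    have h2 := abs_le.mp (happrox Sstar hSstarCard)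
    have h3 := hShatMax ω Sstar hSstarCard
    have h4 : (∑ j ∈ Shat ω, L j ω) ≤ ∑ j ∈ Shat ω, φ j :=
      Finset.sum_le_sum (fun j _ => (hω j).1)
    have h5 : (∑ j ∈ Sstar, φ j) ≤ ∑ j ∈ Sstar, U j ω :=
      Finset.sum_le_sum (fun j _ => (hω j).2)
    have h6 : (∑ j ∈ Shat ω, L j ω) =
        (∑ j ∈ Shat ω, U j ω) - ∑ j ∈ Shat ω, (U j ω - L j ω) := by
      rw [Finset.sum_sub_distrib]; ring
    simp only [Set.mem_setOf_eq, ge_iff_le]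
    linarith
  have hBle : μ B ≤ ENNReal.ofReal (α + ∑ j, (em j + ep j)) := by
    calc μ B ≤ ∑' j : Fin p, μ ({ω | φ j < L j ω} ∪ {ω | φ j > U j ω}) :=
          measure_iUnion_le _
      _ = ∑ j : Fin p, μ ({ω | φ j < L j ω} ∪ {ω | φ j > U j ω}) := tsum_fintype _
      _ ≤ ∑ j : Fin p, (ENNReal.ofReal (α / (2 * p) + em j) +
            ENNReal.ofReal (α / (2 * p) + ep j)) := by
          apply Finset.sum_le_sum
          intro j _
          exact le_trans (measure_union_le _ _) (add_le_add (hcovL j) (hcovU j))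
      _ = ∑ j : Fin p, ENNReal.ofReal ((α / (2 * p) + em j) + (α / (2 * p) + ep j)) := by
          apply Finset.sum_congr rfl
          intro j _
          rw [ENNReal.ofReal_add (add_nonneg (by positivity) (hem j))
            (add_nonneg (by positivity) (hep j))]
      _ = ENNReal.ofReal (∑ j : Fin p, ((α / (2 * p) + em j) + (α / (2 * p) + ep j))) := by
          rw [ENNReal.ofReal_sum_of_nonneg]
          intro j _
          have := hem j; have := hep j
          positivity
      _ = ENNReal.ofReal (α + ∑ j, (em j + ep j)) := by
          congr 1
          have hp0 : (p : ℝ) ≠ 0 := by positivity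
          simp only [Finset.sum_add_distrib, Finset.sum_const, Finset.card_univ,
            Fintype.card_fin, nsmul_eq_mul]
          field_simp
          ring
  calc ENNReal.ofReal (1 - α - ∑ j, (em j + ep j))
      = ENNReal.ofReal (1 - (α + ∑ j, (em j + ep j))) := by ring_nf
    _ = ENNReal.ofReal 1 - ENNReal.ofReal (α + ∑ j, (em j + ep j)) := by
        rw [ENNReal.ofReal_sub]
        exact add_nonneg hα0.le
          (Finset.sum_nonneg fun j _ => add_nonneg (hem j) (hep j))
    _ ≤ 1 - μ B := by
        rw [ENNReal.ofReal_one]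
        exact tsub_le_tsub_left hBle 1
    _ = μ Bᶜ := (prob_compl_eq_one_sub hBmeas).symm
    _ ≤ _ := measure_mono hsub
end

section
/- Probabilistic near-optimal utility of the selected modality set (regression form, additive utility): let (Ω, μ) be a probability space, p, q ≥ 1 integers, α ∈ (0,1), φ : {1,…,p} → ℝ fixed reals, and V a real-valued function on subsets of {1,…,p} with Σ_{j∈S} φ_j = V(S) for every subset S with |S| ≤ q. Let L_j, U_j : Ω → ℝ be measurable and e_j⁻, e_j⁺ ≥ 0 satisfy μ({ω : φ_j < L_j(ω)}) ≤ α/(2p) + e_j⁻ and μ({ω : φ_j > U_j(ω)}) ≤ α/(2p) + e_j⁺ for every j. Let Ŝ : Ω → (subsets of {1,…,p}) satisfy, for every ω, |Ŝ(ω)| ≤ q and Σ_{j∈S} U_j(ω) ≤ Σ_{j∈Ŝ(ω)} U_j(ω) for every subset S with |S| ≤ q, and let S* with |S*| ≤ q satisfy V(S) ≤ V(S*) for every subset S with |S| ≤ q. Then μ({ω : V(Ŝ(ω)) ≥ V(S*) − Σ_{j∈Ŝ(ω)} (U_j(ω) − L_j(ω))}) ≥ 1 − α − Σ_{j=1}^p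 (e_j⁻ + e_j⁺). -/
open Finset MeasureTheory

/-! On the event that every interval `[L_j, U_j]` covers `φ_j`, additivity and the maximality
of `Ŝ` for the upper bounds give
`V(S*) = Σ_{S*} φ ≤ Σ_{S*} U ≤ Σ_{Ŝ} U = Σ_{Ŝ} φ + Σ_{Ŝ} (U - φ) ≤ V(Ŝ) + Σ_{Ŝ} (U - L)`.
By the union bound this event fails with probability at most
`Σ_j (α/p + e_j⁻ + e_j⁺) = α + Σ_j (e_j⁻ + e_j⁺)`. -/

theorem sum_le_sum_add_sum_sub_of_bounds {ι : Type*} (φ L U : ι → ℝ) {s t : Finset ι}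
    (hL : ∀ j ∈ s, L j ≤ φ j) (hU : ∀ j ∈ t, φ j ≤ U j)
    (hmax : ∑ j ∈ t, U j ≤ ∑ j ∈ s, U j) :
    ∑ j ∈ t, φ j ≤ ∑ j ∈ s, φ j + ∑ j ∈ s, (U j - L j) :=
  calc ∑ j ∈ t, φ j ≤ ∑ j ∈ t, U j := sum_le_sum hU
    _ ≤ ∑ j ∈ s, U j := hmax
    _ ≤ ∑ j ∈ s, (φ j + (U j - L j)) := sum_le_sum fun j hj => by linarith [hL j hj]
    _ = ∑ j ∈ s, φ j + ∑ j ∈ s, (U j - L j) := sum_add_distrib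

theorem ofReal_one_sub_sum_le_measure_iInter {Ω ι : Type*} [MeasurableSpace Ω] {μ : Measure Ω}
    [IsProbabilityMeasure μ] [Fintype ι] {G : ι → Set Ω} {c : ι → ℝ} (hc : ∀ i, 0 ≤ c i)
    (hG : ∀ i, μ (G i)ᶜ ≤ ENNReal.ofReal (c i)) :
    ENNReal.ofReal (1 - ∑ i, c i) ≤ μ (⋂ i, G i) := by
  have hcompl : μ (⋂ i, G i)ᶜ ≤ ENNReal.ofReal (∑ i, c i) :=
    calc μ (⋂ i, G i)ᶜ = μ (⋃ i, (G i)ᶜ) := by rw [Set.compl_iInter]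
      _ ≤ ∑ i, μ (G i)ᶜ := measure_iUnion_fintype_le μ _
      _ ≤ ∑ i, ENNReal.ofReal (c i) := sum_le_sum fun i _ => hG i
      _ = ENNReal.ofReal (∑ i, c i) := (ENNReal.ofReal_sum_of_nonneg fun i _ => hc i).symm
  calc ENNReal.ofReal (1 - ∑ i, c i)
      = 1 - ENNReal.ofReal (∑ i, c i) := by
        rw [ENNReal.ofReal_sub _ (sum_nonneg fun i _ => hc i), ENNReal.ofReal_one]
    _ ≤ 1 - μ (⋂ i, G i)ᶜ := tsub_le_tsub_left hcompl 1
    _ ≤ μ (⋂ i, G i) := tsub_le_iff_right.2 <| by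
        simpa only [measure_univ] using measure_univ_le_add_compl (μ := μ) (⋂ i, G i)

theorem measure_compl_Icc_le {Ω : Type*} [MeasurableSpace Ω] {μ : Measure Ω} {x : ℝ}
    {L U : Ω → ℝ} {a b : ℝ} (ha : 0 ≤ a) (hb : 0 ≤ b)
    (hL : μ {ω | x < L ω} ≤ ENNReal.ofReal a) (hU : μ {ω | x > U ω} ≤ ENNReal.ofReal b) :
    μ {ω | L ω ≤ x ∧ x ≤ U ω}ᶜ ≤ ENNReal.ofReal (a + b) :=
  calc μ {ω | L ω ≤ x ∧ x ≤ U ω}ᶜ ≤ μ ({ω | x < L ω} ∪ {ω | x > U ω}) :=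
        measure_mono fun ω hω => by
          simpa only [Set.mem_compl_iff, Set.mem_ofPred_eq, not_and_or, not_le, Set.mem_union,
            gt_iff_lt] using hω
    _ ≤ μ {ω | x < L ω} + μ {ω | x > U ω} := measure_union_le _ _
    _ ≤ ENNReal.ofReal a + ENNReal.ofReal b := add_le_add hL hU
    _ = ENNReal.ofReal (a + b) := (ENNReal.ofReal_add ha hb).symm

theorem near_optimal_selection_regression_general
    {Ω : Type*} [MeasurableSpace Ω] (μ : Measure Ω) [IsProbabilityMeasure μ]
    (p q : ℕ) (hp : 1 ≤ p) (α : ℝ) (hα : α ∈ Set.Ioo (0 : ℝ) 1)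
    (φ : Fin p → ℝ) (V : Finset (Fin p) → ℝ)
    (hadd : ∀ S : Finset (Fin p), S.card ≤ q → (∑ j ∈ S, φ j) = V S)
    (L U : Fin p → Ω → ℝ)
    (em ep : Fin p → ℝ) (hem : ∀ j, 0 ≤ em j) (hep : ∀ j, 0 ≤ ep j)
    (hcovL : ∀ j, μ {ω | φ j < L j ω} ≤ ENNReal.ofReal (α / (2 * p) + em j))
    (hcovU : ∀ j, μ {ω | φ j > U j ω} ≤ ENNReal.ofReal (α / (2 * p) + ep j))
    (Shat : Ω → Finset (Fin p)) (hShatCard : ∀ ω, (Shat ω).card ≤ q)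
    (hShatMax : ∀ ω, ∀ S : Finset (Fin p), S.card ≤ q →
      (∑ j ∈ S, U j ω) ≤ ∑ j ∈ Shat ω, U j ω)
    (Sstar : Finset (Fin p)) (hSstarCard : Sstar.card ≤ q) :
    μ {ω | V (Shat ω) ≥ V Sstar - ∑ j ∈ Shat ω, (U j ω - L j ω)} ≥
      ENNReal.ofReal (1 - α - ∑ j, (em j + ep j)) := by
  have hα₀ : 0 ≤ α / (2 * p) := div_nonneg hα.1.le (by positivity)
  have hsum : ∑ j, (α / (2 * p) + em j + (α / (2 * p) + ep j)) = α + ∑ j, (em j + ep j) := by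
    have : (p : ℝ) ≠ 0 := Nat.cast_ne_zero.2 (by omega)
    simp only [sum_add_distrib, sum_const, card_univ, Fintype.card_fin, nsmul_eq_mul]
    field_simp
    ring
  have hcover := ofReal_one_sub_sum_le_measure_iInter
    (G := fun j => {ω | L j ω ≤ φ j ∧ φ j ≤ U j ω})
    (fun j => by linarith [hem j, hep j])
    (fun j => measure_compl_Icc_le (add_nonneg hα₀ (hem j)) (add_nonneg hα₀ (hep j))
      (hcovL j) (hcovU j))
  refine le_trans ?_ (hcover.trans (measure_mono fun ω hω => ?_))
  · rw [hsum, sub_sub]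
  · simp only [Set.mem_iInter, Set.mem_ofPred_eq] at hω ⊢
    rw [← hadd _ (hShatCard ω), ← hadd _ hSstarCard]
    linarith [sum_le_sum_add_sum_sub_of_bounds φ (fun j => L j ω) (fun j => U j ω)
      (fun j _ => (hω j).1) (fun j _ => (hω j).2) (hShatMax ω Sstar hSstarCard)]

/-- Probabilistic near-optimal utility of the selected modality set (regression form,
additive utility): if each conformal interval `[L_j, U_j]` miscovers the Shapley value
`φ_j` on each side with probability at most `α/(2p)` plus slack `e_j⁻`/`e_j⁺`, the utility
`V` is exactly additive in `φ` on subsets of size at most `q`, `Ŝ(ω)` maximizes the sum of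
upper bounds among subsets of size at most `q`, and `S*` maximizes `V`, then with
probability at least `1 − α − Σ_j (e_j⁻ + e_j⁺)`,
`V(Ŝ(ω)) ≥ V(S*) − Σ_{j∈Ŝ(ω)} (U_j(ω) − L_j(ω))`. -/
theorem near_optimal_selection_regression
    {Ω : Type*} [MeasurableSpace Ω] (μ : Measure Ω) [IsProbabilityMeasure μ]
    (p q : ℕ) (hp : 1 ≤ p) (hq : 1 ≤ q) (α : ℝ) (hα : α ∈ Set.Ioo (0 : ℝ) 1)
    (φ : Fin p → ℝ) (V : Finset (Fin p) → ℝ)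
    (hadd : ∀ S : Finset (Fin p), S.card ≤ q → (∑ j ∈ S, φ j) = V S)
    (L U : Fin p → Ω → ℝ) (hLmeas : ∀ j, Measurable (L j)) (hUmeas : ∀ j, Measurable (U j))
    (em ep : Fin p → ℝ) (hem : ∀ j, 0 ≤ em j) (hep : ∀ j, 0 ≤ ep j)
    (hcovL : ∀ j, μ {ω | φ j < L j ω} ≤ ENNReal.ofReal (α / (2 * p) + em j))
    (hcovU : ∀ j, μ {ω | φ j > U j ω} ≤ ENNReal.ofReal (α / (2 * p) + ep j))
    (Shat : Ω → Finset (Fin p)) (hShatCard : ∀ ω, (Shat ω).card ≤ q)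
    (hShatMax : ∀ ω, ∀ S : Finset (Fin p), S.card ≤ q →
      (∑ j ∈ S, U j ω) ≤ ∑ j ∈ Shat ω, U j ω)
    (Sstar : Finset (Fin p)) (hSstarCard : Sstar.card ≤ q)
    (hSstarMax : ∀ S : Finset (Fin p), S.card ≤ q → V S ≤ V Sstar) :
    μ {ω | V (Shat ω) ≥ V Sstar - ∑ j ∈ Shat ω, (U j ω - L j ω)} ≥
      ENNReal.ofReal (1 - α - ∑ j, (em j + ep j)) :=
  near_optimal_selection_regression_general μ p q hp α hα φ V hadd L U em ep hem hep hcovL hcovU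
    Shat hShatCard hShatMax Sstar hSstarCard
end
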